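/- At the level of words and components: for any word η ∈ X* and any two pairs d = (d1, d2), h = (h1, h2) of formal power series, (η ∘̃ d) ∘̃ h = η ∘̃ (h1 ⧢ (d1 ∘̃ h), (h2 ⧢ (d1 ∘̃ h)) + (d2 ∘̃ h)). -/

import Mathlib

/-- Words over the alphabet X = {x₀, x₁}, encoded as lists of booleans
(`false` ↔ x₀, `true` ↔ x₁). -/
abbrev Word : Type := List Bool

/-- Noncommutative formal power series over X with real coefficients. -/
abbrev Series : Type := Word → ℝ

/-- Auxiliary recursion computing the coefficient of the shuffle product. -/
def sh : Word → Series → Series → ℝ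
  | [], c, d => c [] * d []
  | a :: w, c, d => sh w (fun u => c (a :: u)) d + sh w c (fun u => d (a :: u))

/-- The shuffle product of two series. -/
def shuffle (c d : Series) : Series := fun w => sh w c d

/-- Left concatenation by the letter x₀. -/
def X0f (c : Series) : Series := fun w =>
  match w with
  | false :: w' => c w'
  | _ => 0

/-- Left concatenation by the letter x₁. -/
def X1f (c : Series) : Series := fun w =>
  match w with
  | true :: w' => c w'
  | _ => 0

/-- The indicator series of a word. -/
def deltaW (η : Word) : Series := fun w => if w = η then 1 else 0

/-- The shuffle unit 1∅. -/
def oneS : Series := deltaW []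

/-- Mixed composition product of a word with a pair of series:
∅ ∘̃ z = ∅, (x₀η) ∘̃ z = x₀(η ∘̃ z),
(x₁η) ∘̃ z = x₁(z₁ ⧢ (η ∘̃ z)) + x₀(z₂ ⧢ (η ∘̃ z)). -/
def wmix : Word → Series × Series → Series
  | [], _ => oneS
  | false :: η, z => X0f (wmix η z)
  | true :: η, z => X1f (shuffle z.1 (wmix η z)) + X0f (shuffle z.2 (wmix η z))

/-- Mixed composition product `c ∘̃ z`, extended linearly in the left argument.
(Since `wmix η z` vanishes on words shorter than `η`, the sum may be truncated.) -/
def mixcomp (c : Series) (z : Series × Series) : Series := fun w =>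
  ∑ n ∈ Finset.range (w.length + 1), ∑ f : Fin n → Bool,
    c (List.ofFn f) * wmix (List.ofFn f) z w

/-- Composition product of a word with a series:
∅ ∘ d = ∅, (x₀η) ∘ d = x₀(η ∘ d), (x₁η) ∘ d = x₀(d ⧢ (η ∘ d)). -/
def wcomp : Word → Series → Series
  | [], _ => oneS
  | false :: η, d => X0f (wcomp η d)
  | true :: η, d => X0f (shuffle d (wcomp η d))

/-- Composition product `c ∘ d`, extended linearly in the left argument. -/
def compP (c d : Series) : Series := fun w =>
  ∑ n ∈ Finset.range (w.length + 1), ∑ f : Fin n → Bool,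
    c (List.ofFn f) * wcomp (List.ofFn f) d w

/-- The group product on G: (c₁,c₂)·(d₁,d₂) = (c₁ ⧢ d₁, c₂ + c₁ ⧢ d₂). -/
def gmul (c d : Series × Series) : Series × Series :=
  (shuffle c.1 d.1, c.2 + shuffle c.1 d.2)

/-- The identity element e = (1∅, 0) of G. -/
def geId : Series × Series := (oneS, 0)

/-- Shuffle powers. -/
def shPow (c : Series) : ℕ → Series
  | 0 => oneS
  | n + 1 => shuffle c (shPow c n)

/-- Shuffle inverse of a series with constant coefficient 1, via the
geometric series c^{⧢ -1} = Σ_k (1∅ - c)^{⧢ k} (truncated by word length,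
which is exact since 1∅ - c is proper). -/
def shInv (c : Series) : Series := fun w =>
  ∑ k ∈ Finset.range (w.length + 1), shPow (oneS - c) k w

/-- The group inverse in (G,·). -/
def ginv (c : Series × Series) : Series × Series :=
  (shInv c.1, -(shuffle (shInv c.1) c.2))

/-- The product ◁ on G, componentwise mixed composition. -/
def triOp (c d : Series × Series) : Series × Series :=
  (mixcomp c.1 d, mixcomp c.2 d)

/-- The Grossman–Larson product c ⋆ d = (c ◁ d) · d. -/
def starOp (c d : Series × Series) : Series × Series := gmul (triOp c d) d

/-!
Write `x⁻¹c` for the left shift `w ↦ c (x w)`. A series is determined by its constant term and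
its two left shifts, shuffle is the derivation `x⁻¹(c ⧢ d) = x⁻¹c ⧢ d + c ⧢ x⁻¹d`, and the
mixed composition satisfies
`x₁⁻¹(c ∘̃ z) = z₁ ⧢ (x₁⁻¹c ∘̃ z)` and `x₀⁻¹(c ∘̃ z) = x₀⁻¹c ∘̃ z + z₂ ⧢ (x₁⁻¹c ∘̃ z)`.
Comparing shifts, an induction on word length shows that `· ∘̃ z` is a morphism of shuffle
algebras, and that it sends `x₀c` to `x₀(c ∘̃ z)` and `x₁c` to `x₁(z₁ ⧢ (c ∘̃ z)) + x₀(z₂ ⧢ (c ∘̃ z))`.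
The theorem then follows by induction on `η`, using associativity and distributivity of `⧢`.
-/

open Finset Set

def lshift (x : Bool) : Series →ₗ[ℝ] Series := LinearMap.funLeft ℝ ℝ (List.cons x)

lemma lshift_apply (x : Bool) (c : Series) (w : Word) : lshift x c w = c (x :: w) := rfl

lemma series_ext {c d : Series} (h_nil : c [] = d []) (h_lshift : ∀ x, lshift x c = lshift x d) :
    c = d := by
  funext w
  cases w with
  | nil => exact h_nil
  | cons x w => exact congrFun (h_lshift x) w

lemma shuffle_nil (c d : Series) : shuffle c d [] = c [] * d [] := rfl

lemma shuffle_cons (x : Bool) (w : Word) (c d : Series) :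
    shuffle c d (x :: w) = shuffle (lshift x c) d w + shuffle c (lshift x d) w := rfl

lemma lshift_shuffle (x : Bool) (c d : Series) :
    lshift x (shuffle c d) = shuffle (lshift x c) d + shuffle c (lshift x d) := rfl

lemma shuffle_comm (c d : Series) : shuffle c d = shuffle d c := by
  funext w
  induction w generalizing c d with
  | nil => exact mul_comm _ _
  | cons x w ih => rw [shuffle_cons, shuffle_cons, ih (lshift x c), ih c, add_comm]

lemma shuffle_add_right (c d d' : Series) : shuffle c (d + d') = shuffle c d + shuffle c d' := by
  funext w
  induction w generalizing c d d' with
  | nil => exact mul_add _ _ _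
  | cons x w ih =>
    simp only [Pi.add_apply, shuffle_cons, map_add, ih]
    ring

lemma shuffle_smul_right (r : ℝ) (c d : Series) : shuffle c (r • d) = r • shuffle c d := by
  funext w
  induction w generalizing c d with
  | nil => exact mul_left_comm _ _ _
  | cons x w ih =>
    simp only [Pi.smul_apply, smul_eq_mul, shuffle_cons, map_smul, ih]
    ring

lemma shuffle_add_left (c c' d : Series) : shuffle (c + c') d = shuffle c d + shuffle c' d := by
  rw [shuffle_comm, shuffle_add_right, shuffle_comm d, shuffle_comm d]

lemma shuffle_smul_left (r : ℝ) (c d : Series) : shuffle (r • c) d = r • shuffle c d := by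
  rw [shuffle_comm, shuffle_smul_right, shuffle_comm]

def shuffleBilin : Series →ₗ[ℝ] Series →ₗ[ℝ] Series :=
  LinearMap.mk₂ ℝ shuffle shuffle_add_left shuffle_smul_left shuffle_add_right shuffle_smul_right

lemma shuffle_zero_right (c : Series) : shuffle c 0 = 0 := map_zero (shuffleBilin c)

lemma shuffle_sum_right {ι : Type*} (c : Series) (s : Finset ι) (d : ι → Series) :
    shuffle c (∑ i ∈ s, d i) = ∑ i ∈ s, shuffle c (d i) :=
  map_sum (shuffleBilin c) d s

lemma shuffle_assoc (a b c : Series) : shuffle (shuffle a b) c = shuffle a (shuffle b c) := by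
  funext w
  induction w generalizing a b c with
  | nil => exact mul_assoc _ _ _
  | cons x w ih =>
    simp only [shuffle_cons, lshift_shuffle, shuffle_add_left, shuffle_add_right, Pi.add_apply, ih]
    ring

lemma shuffle_left_comm (a b c : Series) : shuffle a (shuffle b c) = shuffle b (shuffle a c) := by
  rw [← shuffle_assoc, shuffle_comm a, shuffle_assoc]

lemma eqOn_shuffle_right {d d' : Series} {n : ℕ} (h : EqOn d d' {u : Word | u.length ≤ n})
    (c : Series) : EqOn (shuffle c d) (shuffle c d') {u : Word | u.length ≤ n} := by
  intro w hw
  induction w generalizing c d d' n with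
  | nil => exact congrArg (c [] * ·) (h (Nat.zero_le n))
  | cons x w ih =>
    have hw : w.length + 1 ≤ n := hw
    have h_lshift : EqOn (lshift x d) (lshift x d') {u : Word | u.length ≤ n - 1} :=
      fun u (hu : u.length ≤ n - 1) => h (show u.length + 1 ≤ n by omega)
    rw [shuffle_cons, shuffle_cons, ih h (lshift x c) (show w.length ≤ n by omega),
      ih h_lshift c (show w.length ≤ n - 1 by omega)]

lemma shuffle_eqOn_zero {d : Series} {n : ℕ} (h : EqOn d 0 {u : Word | u.length ≤ n})
    (c : Series) : EqOn (shuffle c d) 0 {u : Word | u.length ≤ n} := by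
  simpa only [shuffle_zero_right] using eqOn_shuffle_right h c

@[simp] lemma X0f_nil (c : Series) : X0f c [] = 0 := rfl
@[simp] lemma X1f_nil (c : Series) : X1f c [] = 0 := rfl
@[simp] lemma lshift_false_X0f (c : Series) : lshift false (X0f c) = c := rfl
@[simp] lemma lshift_true_X0f (c : Series) : lshift true (X0f c) = 0 := rfl
@[simp] lemma lshift_false_X1f (c : Series) : lshift false (X1f c) = 0 := rfl
@[simp] lemma lshift_true_X1f (c : Series) : lshift true (X1f c) = c := rfl

lemma X0f_add (c c' : Series) : X0f (c + c') = X0f c + X0f c' :=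
  series_ext (by simp) fun x => by cases x <;> simp

@[simp] lemma lshift_oneS (x : Bool) : lshift x oneS = 0 := by
  funext w
  simp [lshift_apply, oneS, deltaW]

lemma wmix_eqOn_zero (η : Word) (z : Series × Series) :
    EqOn (wmix η z) 0 {u : Word | u.length < η.length} := by
  induction η with
  | nil => intro u hu; simp at hu
  | cons x η ih =>
    rintro (_ | ⟨b, u⟩) hu
    · cases x <;> simp [wmix]
    have h_len : u.length < η.length := by simpa using hu
    have h_sh (c : Series) : shuffle c (wmix η z) u = 0 :=
      shuffle_eqOn_zero (fun v (hv : v.length ≤ u.length) => ih (show v.length < η.length by omega)) c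
        (le_refl u.length)
    show lshift b (wmix (x :: η) z) u = 0
    cases x <;> cases b <;>
      simp only [wmix, map_add, lshift_false_X0f, lshift_true_X0f, lshift_false_X1f,
        lshift_true_X1f, Pi.add_apply, Pi.zero_apply, ih h_len, h_sh, add_zero]

lemma sum_pi_fin_succ_bool {M : Type*} [AddCommMonoid M] (n : ℕ) (F : (Fin (n + 1) → Bool) → M) :
    ∑ f : Fin (n + 1) → Bool, F f
      = ∑ g : Fin n → Bool, (F (Fin.cons false g) + F (Fin.cons true g)) := by
  rw [← (Fin.consEquiv fun _ => Bool).sum_comp F, Fintype.sum_prod_type, Fintype.sum_bool,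
    ← sum_add_distrib]
  exact sum_congr rfl fun g _ => add_comm _ _

/-- Unlike `mixcomp`, whose sum is truncated at the length of the argument word, this
truncation is uniform, so that `lshift` can be applied termwise. -/
def mixcompUpTo (N : ℕ) (c : Series) (z : Series × Series) : Series :=
  ∑ n ∈ range (N + 1), ∑ f : Fin n → Bool, c (List.ofFn f) • wmix (List.ofFn f) z

lemma mixcomp_apply (c : Series) (z : Series × Series) (w : Word) :
    mixcomp c z w = mixcompUpTo w.length c z w := by
  simp only [mixcomp, mixcompUpTo, Finset.sum_apply, Pi.smul_apply, smul_eq_mul]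

lemma eqOn_mixcomp_mixcompUpTo (N : ℕ) (c : Series) (z : Series × Series) :
    EqOn (mixcomp c z) (mixcompUpTo N c z) {u : Word | u.length ≤ N} := by
  intro u (hu : u.length ≤ N)
  rw [mixcomp_apply]
  simp only [mixcompUpTo, Finset.sum_apply, Pi.smul_apply]
  refine sum_subset (range_subset_range.mpr (by omega)) fun n _ hn => sum_eq_zero fun f _ => ?_
  have hn : u.length < n := by simpa using hn
  rw [wmix_eqOn_zero _ z (show u.length < (List.ofFn f).length by rwa [List.length_ofFn]),
    Pi.zero_apply, smul_zero]

lemma mixcompUpTo_succ (N : ℕ) (c : Series) (z : Series × Series) :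
    mixcompUpTo (N + 1) c z = c [] • oneS + ∑ n ∈ range (N + 1), ∑ g : Fin n → Bool,
      (c (false :: List.ofFn g) • X0f (wmix (List.ofFn g) z)
        + c (true :: List.ofFn g) • (X1f (shuffle z.1 (wmix (List.ofFn g) z))
          + X0f (shuffle z.2 (wmix (List.ofFn g) z)))) := by
  rw [mixcompUpTo, sum_range_succ', add_comm]
  congr 1
  · simp [wmix]
  · simp only [sum_pi_fin_succ_bool, List.ofFn_succ, Fin.cons_zero, Fin.cons_succ, wmix]

lemma lshift_true_mixcompUpTo_succ (N : ℕ) (c : Series) (z : Series × Series) :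
    lshift true (mixcompUpTo (N + 1) c z) = shuffle z.1 (mixcompUpTo N (lshift true c) z) := by
  rw [mixcompUpTo_succ]
  simp only [mixcompUpTo, map_add, map_sum, map_smul, lshift_oneS,
    lshift_true_X0f, lshift_true_X1f, shuffle_sum_right, shuffle_smul_right, lshift_apply,
    smul_zero, zero_add, add_zero]

lemma lshift_false_mixcompUpTo_succ (N : ℕ) (c : Series) (z : Series × Series) :
    lshift false (mixcompUpTo (N + 1) c z)
      = mixcompUpTo N (lshift false c) z + shuffle z.2 (mixcompUpTo N (lshift true c) z) := by
  rw [mixcompUpTo_succ]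
  simp only [mixcompUpTo, map_add, map_sum, map_smul, lshift_oneS,
    lshift_false_X0f, lshift_false_X1f, shuffle_sum_right, shuffle_smul_right, lshift_apply,
    smul_zero, zero_add, sum_add_distrib]

lemma mixcomp_nil (c : Series) (z : Series × Series) : mixcomp c z [] = c [] := by
  simp [mixcomp, wmix, oneS, deltaW]

lemma lshift_true_mixcomp (c : Series) (z : Series × Series) :
    lshift true (mixcomp c z) = shuffle z.1 (mixcomp (lshift true c) z) := by
  funext w
  rw [lshift_apply, mixcomp_apply, List.length_cons, ← lshift_apply true (mixcompUpTo _ c z),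
    lshift_true_mixcompUpTo_succ]
  exact eqOn_shuffle_right (eqOn_mixcomp_mixcompUpTo _ _ z).symm z.1 (le_refl w.length)

lemma lshift_false_mixcomp (c : Series) (z : Series × Series) :
    lshift false (mixcomp c z)
      = mixcomp (lshift false c) z + shuffle z.2 (mixcomp (lshift true c) z) := by
  funext w
  rw [lshift_apply, mixcomp_apply, List.length_cons, ← lshift_apply false (mixcompUpTo _ c z),
    lshift_false_mixcompUpTo_succ, Pi.add_apply, Pi.add_apply, mixcomp_apply]
  congr 1
  exact eqOn_shuffle_right (eqOn_mixcomp_mixcompUpTo _ _ z).symm z.2 (le_refl w.length)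

lemma mixcomp_add (c c' : Series) (z : Series × Series) :
    mixcomp (c + c') z = mixcomp c z + mixcomp c' z := by
  funext w
  simp only [mixcomp, Pi.add_apply, add_mul, sum_add_distrib]

lemma mixcomp_zero (z : Series × Series) : mixcomp 0 z = 0 := by
  funext w
  simp [mixcomp]

lemma mixcomp_shuffle_eqOn (a b : Series) (z : Series × Series) (n : ℕ) :
    EqOn (mixcomp (shuffle a b) z) (shuffle (mixcomp a z) (mixcomp b z))
      {u : Word | u.length ≤ n} := by
  induction n generalizing a b with
  | zero =>
    rintro (_ | ⟨x, w⟩) hu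
    · rw [mixcomp_nil, shuffle_nil, shuffle_nil, mixcomp_nil, mixcomp_nil]
    · simp at hu
  | succ n ih =>
    rintro (_ | ⟨x, w⟩) hu
    · rw [mixcomp_nil, shuffle_nil, shuffle_nil, mixcomp_nil, mixcomp_nil]
    have hw : w ∈ {u : Word | u.length ≤ n} := Nat.le_of_succ_le_succ hu
    have h_lshift (y : Bool) : EqOn (mixcomp (lshift y (shuffle a b)) z)
        (shuffle (mixcomp (lshift y a) z) (mixcomp b z)
          + shuffle (mixcomp a z) (mixcomp (lshift y b) z)) {u : Word | u.length ≤ n} := by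
      rw [lshift_shuffle, mixcomp_add]
      exact fun u hu => congrArg₂ (· + ·) (ih _ _ hu) (ih _ _ hu)
    rw [← lshift_apply x (mixcomp _ z), ← lshift_apply x (shuffle _ _), lshift_shuffle]
    cases x
    · rw [lshift_false_mixcomp, Pi.add_apply, h_lshift false hw,
        eqOn_shuffle_right (h_lshift true) z.2 hw, lshift_false_mixcomp a, lshift_false_mixcomp b]
      simp only [Pi.add_apply, shuffle_add_left, shuffle_add_right, shuffle_assoc]
      rw [shuffle_left_comm z.2 (mixcomp a z)]
      ring
    · rw [lshift_true_mixcomp, eqOn_shuffle_right (h_lshift true) z.1 hw, lshift_true_mixcomp a,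
        lshift_true_mixcomp b]
      simp only [Pi.add_apply, shuffle_add_right, shuffle_assoc]
      rw [shuffle_left_comm z.1 (mixcomp a z)]

lemma mixcomp_shuffle (a b : Series) (z : Series × Series) :
    mixcomp (shuffle a b) z = shuffle (mixcomp a z) (mixcomp b z) :=
  funext fun w => mixcomp_shuffle_eqOn a b z w.length (le_refl w.length)

lemma mixcomp_oneS (z : Series × Series) : mixcomp oneS z = oneS := by
  refine series_ext (mixcomp_nil oneS z) fun x => ?_
  cases x
  · rw [lshift_false_mixcomp]
    simp only [lshift_oneS, mixcomp_zero, shuffle_zero_right, add_zero]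
  · rw [lshift_true_mixcomp]
    simp only [lshift_oneS, mixcomp_zero, shuffle_zero_right]

lemma mixcomp_X0f (c : Series) (z : Series × Series) :
    mixcomp (X0f c) z = X0f (mixcomp c z) := by
  refine series_ext (mixcomp_nil _ z) fun x => ?_
  cases x
  · rw [lshift_false_mixcomp]
    simp only [lshift_false_X0f, lshift_true_X0f, mixcomp_zero, shuffle_zero_right, add_zero]
  · rw [lshift_true_mixcomp]
    simp only [lshift_true_X0f, mixcomp_zero, shuffle_zero_right]

lemma mixcomp_X1f (c : Series) (z : Series × Series) :
    mixcomp (X1f c) z = X1f (shuffle z.1 (mixcomp c z)) + X0f (shuffle z.2 (mixcomp c z)) := by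
  refine series_ext (by simp [mixcomp_nil]) fun x => ?_
  cases x
  · rw [lshift_false_mixcomp]
    simp only [map_add, lshift_false_X0f, lshift_false_X1f, lshift_true_X1f, mixcomp_zero,
      zero_add]
  · rw [lshift_true_mixcomp]
    simp only [map_add, lshift_true_X0f, lshift_true_X1f, add_zero]

/-- at the level of words, (η ∘̃ d) ∘̃ h
= η ∘̃ (h₁ ⧢ (d₁ ∘̃ h), (h₂ ⧢ (d₁ ∘̃ h)) + (d₂ ∘̃ h)). -/
theorem wmix_mixcomp (η : Word) (d h : Series × Series) :
    mixcomp (wmix η d) h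
      = wmix η (shuffle h.1 (mixcomp d.1 h),
                shuffle h.2 (mixcomp d.1 h) + mixcomp d.2 h) := by
  induction η with
  | nil => exact mixcomp_oneS h
  | cons x η ih =>
    cases x
    · rw [wmix, wmix, mixcomp_X0f, ih]
    · rw [wmix, wmix, mixcomp_add, mixcomp_X1f, mixcomp_X0f, mixcomp_shuffle, mixcomp_shuffle, ih,
        shuffle_assoc, shuffle_add_left, shuffle_assoc, X0f_add, add_assoc]
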